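/- arXiv:2111.14112 — 2 statements merged into one kernel-verified Lean document; each statement's English description precedes it below -/
import Mathlib

section
/- If (α_k) is a rapidly increasing sequence of positive reals (meaning α_k / k^N → ∞ for every positive integer N), then the modified sequence β_k := min(α_k, k^{√k}) (with β_0 := α_0) is still rapidly increasing and satisfies lim_{k→∞} β_k^{1/k} = 1. -/
open Filter Topology

lemma sqrt_nat_tendsto : Tendsto (fun k : ℕ => Real.sqrt k) atTop atTop := by
  rw [tendsto_atTop]
  intro b
  filter_upwards [eventually_ge_atTop (Nat.ceil (b ^ 2))] with k hk
  have h1 : b ^ 2 ≤ (k : ℝ) := le_trans (Nat.le_ceil _) (by exact_mod_cast hk)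
  calc b ≤ |b| := le_abs_self b
    _ = Real.sqrt (b ^ 2) := (Real.sqrt_sq_eq_abs b).symm
    _ ≤ Real.sqrt k := Real.sqrt_le_sqrt h1

/-- If `α` is rapidly increasing (`α_k / k^N → ∞` for every positive integer `N`), then
`β_k := min(α_k, k^{√k})` (with `β_0 = α_0`) is still rapidly increasing and `β_k^{1/k} → 1`. -/
theorem stmt1 (α : ℕ → ℝ) (hpos : ∀ k, 0 < α k)
    (hrapid : ∀ N : ℕ, 0 < N → Tendsto (fun k => α k / (k : ℝ) ^ N) atTop atTop) :
    let β : ℕ → ℝ := fun k => if k = 0 then α 0 else min (α k) ((k : ℝ) ^ (Real.sqrt k))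
    (∀ N : ℕ, 0 < N → Tendsto (fun k => β k / (k : ℝ) ^ N) atTop atTop) ∧
      Tendsto (fun k => (β k) ^ ((1 : ℝ) / k)) atTop (𝓝 1) := by
  intro β
  have hβmin : ∀ k : ℕ, k ≠ 0 → β k = min (α k) ((k : ℝ) ^ (Real.sqrt k)) := by
    intro k hk; simp [β, hk]
  have h1 : ∀ N : ℕ, 0 < N → Tendsto (fun k => β k / (k : ℝ) ^ N) atTop atTop := by
    intro N hN
    rw [tendsto_atTop]
    intro b
    have hα := (tendsto_atTop.1 (hrapid N hN)) b
    have hk1 : ∀ᶠ k : ℕ in atTop, max 1 b ≤ (k : ℝ) :=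
      tendsto_natCast_atTop_atTop.eventually_ge_atTop _
    have hk2 : ∀ᶠ k : ℕ in atTop, (N : ℝ) + 1 ≤ Real.sqrt k :=
      sqrt_nat_tendsto.eventually_ge_atTop _
    filter_upwards [hα, hk1, hk2, eventually_ge_atTop 1] with k hA hB hC hk
    have hk0 : k ≠ 0 := by omega
    have hk1' : (1 : ℝ) ≤ (k : ℝ) := le_trans (le_max_left _ _) hB
    have hkpos : (0 : ℝ) < (k : ℝ) := lt_of_lt_of_le one_pos hk1'
    have hpowpos : (0 : ℝ) < (k : ℝ) ^ N := pow_pos hkpos N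
    rw [hβmin k hk0, le_div_iff₀ hpowpos, le_min_iff]
    constructor
    · calc b * (k : ℝ) ^ N ≤ (α k / (k : ℝ) ^ N) * (k : ℝ) ^ N :=
            mul_le_mul_of_nonneg_right hA hpowpos.le
        _ = α k := div_mul_cancel₀ _ hpowpos.ne'
    · have key : b ≤ (k : ℝ) ^ (Real.sqrt k) / (k : ℝ) ^ N := by
        have : (k : ℝ) ^ (Real.sqrt k) / (k : ℝ) ^ N = (k : ℝ) ^ (Real.sqrt k - N) := by
          rw [Real.rpow_sub hkpos, Real.rpow_natCast]
        rw [this]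
        calc b ≤ (k : ℝ) := le_trans (le_max_right _ _) hB
          _ = (k : ℝ) ^ (1 : ℝ) := (Real.rpow_one _).symm
          _ ≤ (k : ℝ) ^ (Real.sqrt k - N) := by
              apply Real.rpow_le_rpow_of_exponent_le hk1'
              linarith
      calc b * (k : ℝ) ^ N ≤ ((k : ℝ) ^ (Real.sqrt k) / (k : ℝ) ^ N) * (k : ℝ) ^ N :=
            mul_le_mul_of_nonneg_right key hpowpos.le
        _ = (k : ℝ) ^ (Real.sqrt k) := div_mul_cancel₀ _ hpowpos.ne'
  refine ⟨h1, ?_⟩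
  -- lower bound: eventually k ≤ β k
  have hlow : ∀ᶠ k : ℕ in atTop, (k : ℝ) ≤ β k := by
    have := (tendsto_atTop.1 (h1 1 one_pos)) 1
    filter_upwards [this, eventually_ge_atTop 1] with k h hk
    have hkpos : (0 : ℝ) < (k : ℝ) := by exact_mod_cast Nat.pos_of_ne_zero (by omega)
    have := (le_div_iff₀ hkpos).1 (by simpa using h)
    simpa using this
  have hupper : Tendsto (fun k : ℕ => (k : ℝ) ^ ((1 : ℝ) / Real.sqrt k)) atTop (𝓝 1) := by
    have hlog : Tendsto (fun x : ℝ => Real.log x / x ^ ((1:ℝ)/2)) atTop (𝓝 0) :=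
      (isLittleO_log_rpow_atTop (by norm_num)).tendsto_div_nhds_zero
    have hlog' : Tendsto (fun k : ℕ => Real.log k / Real.sqrt k) atTop (𝓝 0) := by
      have := hlog.comp tendsto_natCast_atTop_atTop
      refine this.congr fun k => ?_
      rw [Function.comp_apply, Real.sqrt_eq_rpow]
    have := (Real.continuous_exp.tendsto 0).comp hlog'
    rw [Real.exp_zero] at this
    refine this.congr' ?_
    filter_upwards [eventually_ge_atTop 1] with k hk
    have hkpos : (0 : ℝ) < (k : ℝ) := by exact_mod_cast Nat.pos_of_ne_zero (by omega)
    rw [Function.comp_apply, Real.rpow_def_of_pos hkpos]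
    ring_nf
  refine tendsto_of_tendsto_of_tendsto_of_le_of_le' tendsto_const_nhds hupper ?_ ?_
  · filter_upwards [hlow, eventually_ge_atTop 1] with k hk hk1
    have h1k : (1 : ℝ) ≤ (k : ℝ) := by exact_mod_cast hk1
    exact Real.one_le_rpow (le_trans h1k hk) (by positivity)
  · filter_upwards [hlow, eventually_ge_atTop 1] with k hk hk1
    have hk0 : k ≠ 0 := by omega
    have h1k : (1 : ℝ) ≤ (k : ℝ) := by exact_mod_cast hk1
    have hkpos : (0 : ℝ) < (k : ℝ) := lt_of_lt_of_le one_pos h1k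
    have hβle : β k ≤ (k : ℝ) ^ (Real.sqrt k) := by
      rw [hβmin k hk0]; exact min_le_right _ _
    have hβnn : 0 ≤ β k := le_trans hkpos.le hk
    calc β k ^ ((1 : ℝ) / k) ≤ ((k : ℝ) ^ (Real.sqrt k)) ^ ((1 : ℝ) / k) :=
          Real.rpow_le_rpow hβnn hβle (by positivity)
      _ = (k : ℝ) ^ (Real.sqrt k * ((1 : ℝ) / k)) := by
          rw [← Real.rpow_mul hkpos.le]
      _ = (k : ℝ) ^ ((1 : ℝ) / Real.sqrt k) := by
          rw [mul_one_div, Real.sqrt_div_self']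
end

section
/- Let h(z) = −Σ_j λ_j b_j |B_j| log(1/|B_j|) / (r_j b_j − z), where λ_j > 0, |b_j| = 1, |B_j| ∈ (0,1), r_j = 1 + |B_j|, and Σ_j λ_j |B_j| log(1/|B_j|) < ∞. Then the series converges for all |z| < 1, h is holomorphic on the unit disk, and Re h(z) < 0 for all z in the disk; consequently g := exp(h) maps the disk into itself. -/
/-!
The `j`-th term `c_j b_j / (r_j b_j - z)` has its pole at `r_j b_j`, outside the closed unit disk.
On `‖z‖ ≤ ρ < 1` it is bounded by `c_j / (1 - ρ)`, so the series converges locally uniformly and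
its sum is holomorphic. Since `b_j / (r_j b_j - z) = (r_j - conj b_j * z)⁻¹` and
`re (r_j - conj b_j * z) ≥ r_j - ‖z‖ > 0`, every term has positive real part, hence so has the sum,
and `‖exp h‖ = exp (re h) < 1`.
-/

open Metric

noncomputable def poleTerm (c r : ℝ) (b z : ℂ) : ℂ := c * b / (r * b - z)

section PoleTerm

variable {c r : ℝ} {b z : ℂ}

theorem sub_norm_le_norm_ofReal_mul_sub (hb : ‖b‖ = 1) : r - ‖z‖ ≤ ‖(r : ℂ) * b - z‖ := by
  have := norm_sub_norm_le ((r : ℂ) * b) z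
  rw [norm_mul, Complex.norm_real, hb, mul_one, Real.norm_eq_abs] at this
  linarith [le_abs_self r]

theorem norm_poleTerm_le (hc : 0 ≤ c) (hb : ‖b‖ = 1) (hr : 1 ≤ r) {ρ : ℝ} (hz : ‖z‖ ≤ ρ)
    (hρ : ρ < 1) : ‖poleTerm c r b z‖ ≤ c / (1 - ρ) := by
  have hden : 1 - ρ ≤ ‖(r : ℂ) * b - z‖ := by
    linarith [sub_norm_le_norm_ofReal_mul_sub (r := r) (z := z) hb]
  rw [poleTerm, norm_div, norm_mul, Complex.norm_real, hb, mul_one, Real.norm_of_nonneg hc]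
  exact div_le_div_of_nonneg_left hc (by linarith) hden

theorem differentiableOn_poleTerm (hb : ‖b‖ = 1) (hr : 1 ≤ r) :
    DifferentiableOn ℂ (poleTerm c r b) (ball 0 1) := by
  refine (differentiableOn_const _).div (differentiableOn_const _ |>.sub differentiableOn_id)
    fun z hz h0 => ?_
  have := sub_norm_le_norm_ofReal_mul_sub (r := r) (z := z) hb
  rw [h0, norm_zero] at this
  linarith [mem_ball_zero_iff.mp hz]

theorem re_div_ofReal_mul_sub_pos (hb : ‖b‖ = 1) (hz : ‖z‖ < r) :
    0 < (b / ((r : ℂ) * b - z)).re := by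
  have hb0 : b ≠ 0 := norm_ne_zero_iff.mp (by rw [hb]; exact one_ne_zero)
  have hconj : (starRingEnd ℂ) b * b = 1 := by
    rw [mul_comm, Complex.mul_conj, Complex.normSq_eq_norm_sq, hb]; norm_num
  have hfactor : (r : ℂ) * b - z = b * (r - (starRingEnd ℂ) b * z) := by
    linear_combination z * hconj
  have hre : 0 < ((r : ℂ) - (starRingEnd ℂ) b * z).re := by
    have : ((starRingEnd ℂ) b * z).re ≤ ‖z‖ := by
      simpa [hb] using Complex.re_le_norm ((starRingEnd ℂ) b * z)
    simp only [Complex.sub_re, Complex.ofReal_re]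
    linarith
  rw [hfactor, div_mul_cancel_left₀ hb0, Complex.inv_re]
  exact div_pos hre (Complex.normSq_pos.mpr fun h => by simp [h] at hre)

theorem re_poleTerm_nonneg (hc : 0 ≤ c) (hb : ‖b‖ = 1) (hz : ‖z‖ < r) :
    0 ≤ (poleTerm c r b z).re := by
  rw [poleTerm, mul_div_assoc, Complex.re_ofReal_mul]
  exact mul_nonneg hc (re_div_ofReal_mul_sub_pos hb hz).le

theorem re_poleTerm_pos (hc : 0 < c) (hb : ‖b‖ = 1) (hz : ‖z‖ < r) :
    0 < (poleTerm c r b z).re := by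
  rw [poleTerm, mul_div_assoc, Complex.re_ofReal_mul]
  exact mul_pos hc (re_div_ofReal_mul_sub_pos hb hz)

end PoleTerm

section PoleSeries

variable {c r : ℕ → ℝ} {b : ℕ → ℂ}

theorem summable_poleTerm (hc : ∀ j, 0 ≤ c j) (hcs : Summable c) (hb : ∀ j, ‖b j‖ = 1)
    (hr : ∀ j, 1 ≤ r j) {z : ℂ} (hz : z ∈ ball (0 : ℂ) 1) :
    Summable fun j => poleTerm (c j) (r j) (b j) z :=
  .of_norm_bounded (hcs.div_const _)
    fun j => norm_poleTerm_le (hc j) (hb j) (hr j) le_rfl (mem_ball_zero_iff.mp hz)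

theorem differentiableOn_tsum_poleTerm (hc : ∀ j, 0 ≤ c j) (hcs : Summable c)
    (hb : ∀ j, ‖b j‖ = 1) (hr : ∀ j, 1 ≤ r j) :
    DifferentiableOn ℂ (fun z => ∑' j, poleTerm (c j) (r j) (b j) z) (ball 0 1) := by
  intro z hz
  have hz1 : ‖z‖ < 1 := mem_ball_zero_iff.mp hz
  obtain ⟨ρ, hzρ, hρ1⟩ := exists_between hz1
  have hdiff : DifferentiableOn ℂ (fun z => ∑' j, poleTerm (c j) (r j) (b j) z) (ball 0 ρ) :=
    Complex.differentiableOn_tsum_of_summable_norm (hcs.div_const (1 - ρ))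
      (fun j => (differentiableOn_poleTerm (hb j) (hr j)).mono (ball_subset_ball hρ1.le))
      isOpen_ball
      fun j w hw => norm_poleTerm_le (hc j) (hb j) (hr j) (mem_ball_zero_iff.mp hw).le hρ1
  exact (hdiff.differentiableAt (isOpen_ball.mem_nhds (mem_ball_zero_iff.mpr hzρ)))
    |>.differentiableWithinAt

theorem re_tsum_poleTerm_pos (hc : ∀ j, 0 ≤ c j) {j₀ : ℕ} (hj₀ : 0 < c j₀) (hcs : Summable c)
    (hb : ∀ j, ‖b j‖ = 1) (hr : ∀ j, 1 ≤ r j) {z : ℂ} (hz : z ∈ ball (0 : ℂ) 1) :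
    0 < (∑' j, poleTerm (c j) (r j) (b j) z).re := by
  have hzr : ∀ j, ‖z‖ < r j := fun j => (mem_ball_zero_iff.mp hz).trans_le (hr j)
  have hs := summable_poleTerm hc hcs hb hr hz
  rw [Complex.re_tsum hs]
  exact (Complex.reCLM.summable hs).tsum_pos (fun j => re_poleTerm_nonneg (hc j) (hb j) (hzr j))
    j₀ (re_poleTerm_pos hj₀ (hb j₀) (hzr j₀))

end PoleSeries

theorem log_one_div_pos {x : ℝ} (hx : x ∈ Set.Ioo (0 : ℝ) 1) : 0 < Real.log (1 / x) :=
  Real.log_pos (one_lt_one_div hx.1 hx.2)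

/-- The series `h(z) = −Σ_j λ_j b_j |B_j| log(1/|B_j|)/(r_j b_j − z)` with `r_j = 1 + |B_j|`
converges on the unit disk, defines a holomorphic function with negative real part there,
and hence `g = exp(h)` maps the disk into itself. -/
theorem stmt6 (lam B : ℕ → ℝ) (b : ℕ → ℂ)
    (hlam : ∀ j, 0 < lam j) (hb : ∀ j, ‖b j‖ = 1)
    (hB : ∀ j, B j ∈ Set.Ioo (0 : ℝ) 1)
    (hsum : Summable (fun j => lam j * B j * Real.log (1 / B j))) :
    let r : ℕ → ℝ := fun j => 1 + B j
    let term : ℕ → ℂ → ℂ := fun j z =>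
      ((lam j * B j * Real.log (1 / B j) : ℝ) : ℂ) * b j / ((r j : ℂ) * b j - z)
    let h : ℂ → ℂ := fun z => -∑' j, term j z
    (∀ z ∈ ball (0 : ℂ) 1, Summable (fun j => term j z)) ∧
    DifferentiableOn ℂ h (ball (0 : ℂ) 1) ∧
    (∀ z ∈ ball (0 : ℂ) 1, (h z).re < 0 ∧ ‖Complex.exp (h z)‖ < 1) := by
  intro r term h
  have hc : ∀ j, 0 < lam j * B j * Real.log (1 / B j) := fun j =>
    mul_pos (mul_pos (hlam j) (hB j).1) (log_one_div_pos (hB j))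
  have hr : ∀ j, 1 ≤ r j := fun j => le_add_of_nonneg_right (hB j).1.le
  have hre : ∀ z ∈ ball (0 : ℂ) 1, (h z).re < 0 := fun z hz =>
    neg_neg_of_pos (re_tsum_poleTerm_pos (fun j => (hc j).le) (hc 0) hsum hb hr hz)
  exact ⟨fun z hz => summable_poleTerm (fun j => (hc j).le) hsum hb hr hz,
    (differentiableOn_tsum_poleTerm (fun j => (hc j).le) hsum hb hr).neg,
    fun z hz => ⟨hre z hz, by rw [Complex.norm_exp]; exact Real.exp_lt_one_iff.mpr (hre z hz)⟩⟩
end
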